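/- Let n ≥ 2, m ≥ 1, and let p : Fin n → ℝ satisfy 1/2 ≤ p i ≤ 1 for all i and be sorted in decreasing order (i ≤ j → p i ≥ p j). Define D(s) = (∑ i, s i * p i) − max_i (s i * p i) on the set A = {s : Fin n → ℕ | ∑ i, s i = m}. Then there exists a maximizer s* of D over A whose support is an initial segment of the workers: there is k with 1 ≤ k ≤ n such that s* i > 0 for all i < k and s* i = 0 for all i ≥ k. -/

import Mathlib

/-!
Among the optimal assignments choose one minimising the rank-weighted load `∑ t, s t * rank t`.
If a worker `i` were idle while a less proficient worker `j > i` is loaded, swapping the loads of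
`i` and `j` keeps the total `m`, raises `∑ t, s t * p t` by `c = s j * (p i - p j) ≥ 0` and every
single term `s t * p t` by at most `c`, so the new assignment is still optimal but has smaller
rank-weighted load. Hence the support is a lower set of workers, nonempty since `m ≥ 1`, that is,
an initial segment.
-/

open Finset Function

section

variable {ι : Type*} [Fintype ι]

noncomputable def defenderUtility (p : ι → ℝ) (s : ι → ℕ) : ℝ :=
  ∑ i, (s i : ℝ) * p i - ⨆ i, (s i : ℝ) * p i

variable [DecidableEq ι]

lemma sum_comp_swap_mul_of_eq_zero (s : ι → ℕ) (f : ι → ℝ) {i j : ι} (hi : s i = 0) :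
    ∑ t, (s (Equiv.swap i j t) : ℝ) * f t = ∑ t, (s t : ℝ) * f t + s j * (f i - f j) := by
  have hdiff : ∑ t, (s t : ℝ) * (f (Equiv.swap i j t) - f t) = s j * (f i - f j) := by
    rw [Fintype.sum_eq_single j fun t htj => ?_, Equiv.swap_apply_right]
    rcases eq_or_ne t i with rfl | hti
    · simp [hi]
    · rw [Equiv.swap_apply_of_ne_of_ne hti htj, sub_self, mul_zero]
  calc ∑ t, (s (Equiv.swap i j t) : ℝ) * f t
      = ∑ t, (s t : ℝ) * f (Equiv.swap i j t) := by
        simpa using Equiv.sum_comp (Equiv.swap i j) fun t => (s t : ℝ) * f (Equiv.swap i j t)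
    _ = ∑ t, (s t : ℝ) * f t + s j * (f i - f j) := by
        rw [← hdiff, ← sum_add_distrib]; congr 1; ext t; ring

lemma defenderUtility_le_comp_swap (p : ι → ℝ) (s : ι → ℕ) {i j : ι} (hi : s i = 0)
    (hp : p j ≤ p i) : defenderUtility p s ≤ defenderUtility p (s ∘ Equiv.swap i j) := by
  set c := (s j : ℝ) * (p i - p j)
  have hc : 0 ≤ c := mul_nonneg (Nat.cast_nonneg _) (sub_nonneg.2 hp)
  have hbdd : BddAbove (Set.range fun t => (s t : ℝ) * p t) := (Set.finite_range _).bddAbove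
  have hle : ∀ t, (s t : ℝ) * p t ≤ ⨆ t, (s t : ℝ) * p t := le_ciSup hbdd
  have hmax : ⨆ t, (s (Equiv.swap i j t) : ℝ) * p t ≤ (⨆ t, (s t : ℝ) * p t) + c := by
    have : Nonempty ι := ⟨i⟩
    refine ciSup_le fun t => ?_
    rcases eq_or_ne t j with rfl | htj
    · simpa [hi] using add_nonneg (by simpa [hi] using hle i) hc
    rcases eq_or_ne t i with rfl | hti
    · rw [Equiv.swap_apply_left]; linarith [hle j]
    · rw [Equiv.swap_apply_of_ne_of_ne hti htj]; linarith [hle t]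
  unfold defenderUtility
  rw [comp_def, sum_comp_swap_mul_of_eq_zero s p hi]
  linarith

end

section

variable {ι : Type*} [Fintype ι] [LinearOrder ι]

theorem exists_forall_defenderUtility_le_isLowerSet_support [Nonempty ι] {p : ι → ℝ}
    (hp : Antitone p) (m : ℕ) :
    ∃ s : ι → ℕ, ∑ i, s i = m ∧
      (∀ s' : ι → ℕ, ∑ i, s' i = m → defenderUtility p s' ≤ defenderUtility p s) ∧
      IsLowerSet (support s) := by
  classical
  set A := piAntidiag (univ : Finset ι) m
  have memA : ∀ s, s ∈ A ↔ ∑ i, s i = m := by simp [A]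
  have hA : A.Nonempty := ⟨Pi.single (Classical.arbitrary ι) m, by simp [memA]⟩
  set B := A.filter fun s => ∀ s' ∈ A, defenderUtility p s' ≤ defenderUtility p s
  have hB : B.Nonempty := by
    obtain ⟨s, hs, hmax⟩ := A.exists_max_image (defenderUtility p) hA
    exact ⟨s, mem_filter.2 ⟨hs, hmax⟩⟩
  let r : ι → ℝ := fun t => ((Fintype.orderIsoFinOfCardEq ι rfl).symm t : ℕ)
  have hr : StrictMono r := fun a b hab => by
    simpa [r] using (Fintype.orderIsoFinOfCardEq ι rfl).symm.strictMono hab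
  obtain ⟨s, hsB, hsmin⟩ := B.exists_min_image (fun s => ∑ t, (s t : ℝ) * r t) hB
  obtain ⟨hsA, hsmax⟩ := mem_filter.1 hsB
  refine ⟨s, (memA s).1 hsA, fun s' hs' => hsmax s' ((memA s').2 hs'), fun j i hle hj => ?_⟩
  by_contra hi
  rw [mem_support, not_not] at hi
  have hij : i < j := lt_of_le_of_ne hle (by rintro rfl; exact hj hi)
  have hswapB : s ∘ Equiv.swap i j ∈ B := by
    refine mem_filter.2 ⟨(memA _).2 ?_, fun s' hs' => ?_⟩
    · rw [← (memA s).1 hsA]; exact Equiv.sum_comp (Equiv.swap i j) s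
    · exact (hsmax s' hs').trans (defenderUtility_le_comp_swap p s hi (hp hij.le))
  have hdecr : ∑ t, (s (Equiv.swap i j t) : ℝ) * r t < ∑ t, (s t : ℝ) * r t := by
    rw [sum_comp_swap_mul_of_eq_zero s r hi, add_lt_iff_neg_left]
    exact mul_neg_of_pos_of_neg (by exact_mod_cast Nat.pos_of_ne_zero hj)
      (sub_neg.2 (hr hij))
  exact (hsmin _ hswapB).not_gt hdecr

end

lemma Fin.exists_mem_iff_val_lt_of_isLowerSet {n : ℕ} {S : Set (Fin n)} (hS : IsLowerSet S)
    (hne : S.Nonempty) : ∃ k, 1 ≤ k ∧ k ≤ n ∧ ∀ i : Fin n, i ∈ S ↔ (i : ℕ) < k := by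
  classical
  have hbound : ∃ k, ∀ i ∈ S, (i : ℕ) < k := ⟨n, fun i _ => i.isLt⟩
  obtain ⟨i₀, hi₀⟩ := hne
  refine ⟨Nat.find hbound, (Nat.zero_le _).trans_lt (Nat.find_spec hbound i₀ hi₀),
    Nat.find_min' hbound fun i _ => i.isLt, fun i => ⟨Nat.find_spec hbound i, fun hi => ?_⟩⟩
  by_contra hiS
  have hbelow : ∀ j ∈ S, (j : ℕ) < i := fun j hj =>
    not_le.1 fun hij => hiS (hS (Fin.le_def.2 hij) hj)
  exact (Nat.find_min' hbound hbelow).not_gt hi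

theorem stmt_7_general (n m : ℕ) (hn : 2 ≤ n) (hm : 1 ≤ m)
    (p : Fin n → ℝ)
    (hsort : ∀ i j : Fin n, i ≤ j → p j ≤ p i) :
    ∃ sstar : Fin n → ℕ, (∑ i, sstar i = m) ∧
      (∀ s : Fin n → ℕ, (∑ i, s i = m) →
        ((∑ i, (s i : ℝ) * p i) - ⨆ i, (s i : ℝ) * p i)
          ≤ ((∑ i, (sstar i : ℝ) * p i) - ⨆ i, (sstar i : ℝ) * p i)) ∧
      ∃ k : ℕ, 1 ≤ k ∧ k ≤ n ∧
        (∀ i : Fin n, (i : ℕ) < k → 0 < sstar i) ∧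
        (∀ i : Fin n, k ≤ (i : ℕ) → sstar i = 0) := by
  have : Nonempty (Fin n) := ⟨⟨0, by omega⟩⟩
  obtain ⟨s, hsum, hmax, hlower⟩ :=
    exists_forall_defenderUtility_le_isLowerSet_support (fun i j => hsort i j) m
  have hne : (support s).Nonempty := support_nonempty_iff.2 <| by
    rintro rfl
    simp only [Pi.zero_apply, sum_const_zero] at hsum
    omega
  obtain ⟨k, hk1, hkn, hk⟩ := Fin.exists_mem_iff_val_lt_of_isLowerSet hlower hne
  refine ⟨s, hsum, hmax, k, hk1, hkn, fun i hi => Nat.pos_of_ne_zero ((hk i).2 hi), ?_⟩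
  intro i hi
  by_contra hsi
  exact (not_lt.2 hi) ((hk i).1 hsi)

/-- There is an optimal deterministic assignment whose support is an
initial segment of the workers (the `k` most proficient workers, for some `1 ≤ k ≤ n`). -/
theorem stmt_7 (n m : ℕ) (hn : 2 ≤ n) (hm : 1 ≤ m)
    (p : Fin n → ℝ) (hp : ∀ i, 1 / 2 ≤ p i ∧ p i ≤ 1)
    (hsort : ∀ i j : Fin n, i ≤ j → p j ≤ p i) :
    ∃ sstar : Fin n → ℕ, (∑ i, sstar i = m) ∧
      (∀ s : Fin n → ℕ, (∑ i, s i = m) →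
        ((∑ i, (s i : ℝ) * p i) - ⨆ i, (s i : ℝ) * p i)
          ≤ ((∑ i, (sstar i : ℝ) * p i) - ⨆ i, (sstar i : ℝ) * p i)) ∧
      ∃ k : ℕ, 1 ≤ k ∧ k ≤ n ∧
        (∀ i : Fin n, (i : ℕ) < k → 0 < sstar i) ∧
        (∀ i : Fin n, k ≤ (i : ℕ) → sstar i = 0) :=
  stmt_7_general n m hn hm p hsort
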